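/- With the same data as in the row-sum statement, the array (x_{ij}) defines a semistandard filling: for each column position, the multiset of entries obtained by placing x_{ij} copies of letter j in row i yields weakly increasing rows (automatic) and strictly increasing columns; equivalently, for all 1 ≤ i < r and all letters k, the partial sums satisfy ∑_{j ≤ k} x_{i+1,j} ≤ ∑_{j ≤ k-1} x_{i,j}. -/

import Mathlib

/-- The array of the minimal element of `B^{r,s}` of type `A_n^{(1)}`. -/
def xArr (n r : ℕ) (ℓ : ℕ → ℕ) (i j : ℕ) : ℕ :=
  if j = i then ℓ 0 + ∑ α ∈ Finset.Ico i r, ℓ (α + (n + 1 - r))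
  else if i < j ∧ j < i + (n + 1 - r) then ℓ (j - i)
  else if j = i + (n + 1 - r) then ∑ α ∈ Finset.range i, ℓ (α + (n + 1 - r))
  else 0

/-! With `r' = n + 1 - r`, row `i + 1` of the array, shifted one step to the left, is row `i`
with the single block `ℓ (i + r')` moved from position `i + r'` back to position `i`. Moving
mass to an earlier position can only increase partial sums, which is the column-strictness
inequality. -/

open Finset

theorem Finset.sum_range_le_sum_range_of_add_single_eq {M : Type*} [AddCommMonoid M]
    [PartialOrder M] [IsOrderedCancelAddMonoid M] {f g : ℕ → M} {a b : ℕ} {c : M}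
    (hab : a ≤ b) (hc : 0 ≤ c)
    (h : ∀ j, f j + (Pi.single a c : ℕ → M) j = g j + (Pi.single b c : ℕ → M) j) (k : ℕ) : ∑ j ∈ range k, f j ≤ ∑ j ∈ range k, g j := by
  have hsum : ∑ j ∈ range k, f j + (if a < k then c else 0) =
      ∑ j ∈ range k, g j + (if b < k then c else 0) := by
    simpa only [sum_add_distrib, sum_pi_single', mem_range] using
      sum_congr rfl fun j (_ : j ∈ range k) => h j
  by_cases hbk : b < k
  · rw [if_pos (hab.trans_lt hbk), if_pos hbk] at hsum
    exact (add_left_inj c).mp hsum |>.le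
  · rw [if_neg hbk, add_zero] at hsum
    rw [← hsum]
    split_ifs
    · exact le_add_of_nonneg_right hc
    · rw [add_zero]

theorem xArr_zero (n r : ℕ) (ℓ : ℕ → ℕ) {i : ℕ} (hi : 0 < i) : xArr n r ℓ i 0 = 0 := by
  simp only [xArr]
  split_ifs <;> omega

theorem xArr_succ_succ_add_single (n r : ℕ) (ℓ : ℕ → ℕ) {i : ℕ} (hir : i < r) (hrn : r ≤ n)
    (j : ℕ) :
    xArr n r ℓ (i + 1) (j + 1) + (Pi.single i (ℓ (i + (n + 1 - r))) : ℕ → ℕ) j =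
      xArr n r ℓ i j + (Pi.single (i + (n + 1 - r)) (ℓ (i + (n + 1 - r))) : ℕ → ℕ) j := by
  simp only [xArr, Pi.single_apply, sum_eq_sum_Ico_succ_bot hir, sum_range_succ,
    Nat.add_sub_add_right]
  split_ifs <;> omega

theorem typeA_minimal_element_semistandard_general (n r : ℕ) (hrn : r ≤ n)
    (ℓ : ℕ → ℕ) :
    ∀ i k, 1 ≤ i → i < r →
      ∑ j ∈ Finset.range (k + 1), xArr n r ℓ (i + 1) j ≤
        ∑ j ∈ Finset.range k, xArr n r ℓ i j := by
  intro i k _ hir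
  rw [sum_range_succ', xArr_zero n r ℓ i.succ_pos, add_zero]
  exact sum_range_le_sum_range_of_add_single_eq (Nat.le_add_right _ _) (Nat.zero_le _)
    (xArr_succ_succ_add_single n r ℓ hir hrn) k

/-- Semistandardness (strict increase down columns): for all rows `1 ≤ i < r` and all letters
`k`, `∑_{j ≤ k} x_{i+1,j} ≤ ∑_{j ≤ k-1} x_{i,j}`. -/
theorem typeA_minimal_element_semistandard (n r s : ℕ) (hr1 : 1 ≤ r) (hrn : r ≤ n)
    (ℓ : ℕ → ℕ) (hs : ∑ i ∈ Finset.range (n + 1), ℓ i = s) :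
    ∀ i k, 1 ≤ i → i < r →
      ∑ j ∈ Finset.range (k + 1), xArr n r ℓ (i + 1) j ≤
        ∑ j ∈ Finset.range k, xArr n r ℓ i j :=
  typeA_minimal_element_semistandard_general n r hrn ℓ
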